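/- arXiv:2310.02787 — 4 statements merged into one kernel-verified Lean document; each statement's English description precedes it below -/
import Mathlib

section
/- Let n ≥ 1, let u : ℝ^n → ℝ be a convex function and let φ : ℝ^{n+1} → [0,∞) be continuous. Then the set function ω(·, u, φ) defined on Borel sets B ⊂ ℝ^n by ω(B, u, φ) = ∫_{∂u(B)} φ(x, u*(x)) dx (integral with respect to Lebesgue measure on ℝ^n) is a Borel measure: ∂u(B) is Lebesgue measurable for every Borel B, ω(∅,u,φ)=0, and ω(·,u,φ) is countably additive on pairwise disjoint Borel sets. -/
/-!
If `p ∈ ∂u(x) ∩ ∂u(y)`, then for large `m` both `x` and `y` are subgradients at `p` of the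
truncated conjugate `p ↦ sup {⟪p, z⟫ - u z : ‖z‖ ≤ m, -m ≤ u z}`. This function is `m`-Lipschitz,
so by Rademacher's theorem it is differentiable, and then has at most one subgradient, at almost
every `p`; hence subgradient images of disjoint sets are almost disjoint. For lower semicontinuous
`u` the set `∂u(K)` is closed for compact `K`, so `∂u(F)` is σ-compact for closed `F`, and `∂u(Bᶜ)`
agrees with `∂u(ℝⁿ) \ ∂u(B)` up to a null set. So the Borel sets `B` with `∂u(B)` measurable
contain the open sets and are closed under complements and countable unions, and countable
additivity of `ω` is that of the integral over almost disjoint sets.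
-/

open MeasureTheory Metric Set Filter
open scoped RealInnerProductSpace ENNReal NNReal Topology

noncomputable section

/-- `ℝ^n` as a Euclidean space. -/
abbrev En (n : ℕ) := EuclideanSpace ℝ (Fin n)

/-- The subgradient of a function `u` at a point `x`:
`∂u(x) = {p : u(y) ≥ u(x) + p·(y−x) for all y}`. -/
def subgrad {n : ℕ} (u : En n → ℝ) (x : En n) : Set (En n) :=
  {p | ∀ y, u x + ⟪p, y - x⟫ ≤ u y}

/-- The image of a set `B` under the subgradient: `∂u(B) = ⋃_{x ∈ B} ∂u(x)`. -/
def subgradImage {n : ℕ} (u : En n → ℝ) (B : Set (En n)) : Set (En n) :=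
  ⋃ x ∈ B, subgrad u x

/-- The Fenchel–Legendre transform `u*(x) = sup_y (x·y − u(y))` (real-valued version). -/
def fenchel {n : ℕ} (u : En n → ℝ) (x : En n) : ℝ :=
  ⨆ y, (⟪x, y⟫ - u y)

/-- The vector `(x, t) ∈ ℝ^{n+1}` whose first `n` coordinates are `x` and last is `t`. -/
def lift {n : ℕ} (x : En n) (t : ℝ) : En (n + 1) :=
  WithLp.toLp 2 (Fin.snoc x t : Fin (n + 1) → ℝ)

/-- The set function `ω(B, u, φ) = ∫_{∂u(B)} φ(x, u*(x)) dx`. -/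
def omegaMeas {n : ℕ} (u : En n → ℝ) (φ : En (n + 1) → ℝ) (B : Set (En n)) : ℝ≥0∞ :=
  ∫⁻ x in subgradImage u B, ENNReal.ofReal (φ (lift x (fenchel u x)))

section

variable {n : ℕ}

theorem subgradImage_iUnion {ι : Sort*} (u : En n → ℝ) (B : ι → Set (En n)) :
    subgradImage u (⋃ i, B i) = ⋃ i, subgradImage u (B i) := by
  simp only [subgradImage, biUnion_iUnion]

theorem mem_subgradImage {u : En n → ℝ} {B : Set (En n)} {p : En n} :
    p ∈ subgradImage u B ↔ ∃ x ∈ B, p ∈ subgrad u x := by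
  simp [subgradImage]

theorem fderiv_eq_innerSL_of_mem_subgrad {f : En n → ℝ} {p x : En n}
    (hf : DifferentiableAt ℝ f p) (hx : x ∈ subgrad f p) :
    fderiv ℝ f p = innerSL ℝ x := by
  have hmin : IsLocalMin (fun q => f q - ⟪x, q⟫) p :=
    Filter.Eventually.of_forall fun q => by
      have := hx q
      rw [inner_sub_right] at this
      linarith
  have hderiv := hmin.hasFDerivAt_eq_zero (hf.hasFDerivAt.sub (innerSL ℝ x).hasFDerivAt)
  exact sub_eq_zero.1 hderiv

theorem subsingleton_subgrad_of_differentiableAt {f : En n → ℝ} {p : En n}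
    (hf : DifferentiableAt ℝ f p) : (subgrad f p).Subsingleton := fun x hx y hy =>
  ext_inner_right ℝ fun v => by
    simpa using congrArg (· v) ((fderiv_eq_innerSL_of_mem_subgrad hf hx).symm.trans
      (fderiv_eq_innerSL_of_mem_subgrad hf hy))

/-- `u*` with the supremum restricted to `{z | ‖z‖ ≤ m ∧ -m ≤ u z}`, which makes it finite and
`m`-Lipschitz for every `u`. -/
def truncFenchel (u : En n → ℝ) (m : ℕ) (p : En n) : ℝ :=
  ⨆ z : {z : En n // ‖z‖ ≤ m ∧ -(m : ℝ) ≤ u z}, ⟪p, (z : En n)⟫ - u z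

variable {u : En n → ℝ}

theorem bddAbove_truncFenchel (m : ℕ) (p : En n) :
    BddAbove (range fun z : {z : En n // ‖z‖ ≤ m ∧ -(m : ℝ) ≤ u z} => ⟪p, (z : En n)⟫ - u z) := by
  refine ⟨‖p‖ * m + m, ?_⟩
  rintro _ ⟨⟨z, hz_norm, hz_lower⟩, rfl⟩
  have := (real_inner_le_norm p z).trans (mul_le_mul_of_nonneg_left hz_norm (norm_nonneg p))
  dsimp only
  linarith

theorem truncFenchel_le_add_mul_dist (m : ℕ) (p q : En n) :
    truncFenchel u m p ≤ truncFenchel u m q + m * dist p q := by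
  rcases isEmpty_or_nonempty {z : En n // ‖z‖ ≤ m ∧ -(m : ℝ) ≤ u z} with hS | hS
  · simp only [truncFenchel, Real.iSup_of_isEmpty, zero_add]
    positivity
  refine ciSup_le fun z => ?_
  have hq : ⟪q, (z : En n)⟫ - u z ≤ truncFenchel u m q := le_ciSup (bddAbove_truncFenchel m q) z
  have hpq : ⟪p - q, (z : En n)⟫ ≤ m * dist p q := by
    calc ⟪p - q, (z : En n)⟫ ≤ ‖p - q‖ * ‖(z : En n)‖ := real_inner_le_norm _ _
      _ ≤ ‖p - q‖ * m := mul_le_mul_of_nonneg_left z.2.1 (norm_nonneg _)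
      _ = m * dist p q := by rw [dist_eq_norm, mul_comm]
  rw [inner_sub_left] at hpq
  linarith

theorem lipschitzWith_truncFenchel (m : ℕ) : LipschitzWith m (truncFenchel u m) :=
  LipschitzWith.of_le_add_mul m fun p q => by
    simpa using truncFenchel_le_add_mul_dist m p q

theorem mem_subgrad_truncFenchel {m : ℕ} {p x : En n} (hpx : p ∈ subgrad u x)
    (hx : ‖x‖ ≤ m ∧ -(m : ℝ) ≤ u x) : x ∈ subgrad (truncFenchel u m) p := by
  intro q
  have hp : truncFenchel u m p ≤ ⟪p, x⟫ - u x := by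
    have : Nonempty {z : En n // ‖z‖ ≤ m ∧ -(m : ℝ) ≤ u z} := ⟨⟨x, hx⟩⟩
    refine ciSup_le fun z => ?_
    have := hpx z
    rw [inner_sub_right] at this
    linarith
  have hq : ⟪q, x⟫ - u x ≤ truncFenchel u m q := le_ciSup (bddAbove_truncFenchel m q) ⟨x, hx⟩
  rw [inner_sub_right, real_inner_comm q x, real_inner_comm p x]
  linarith

theorem ae_subsingleton_setOf_mem_subgrad (u : En n → ℝ) :
    ∀ᵐ p, {x | p ∈ subgrad u x}.Subsingleton := by
  have hdiff : ∀ᵐ p, ∀ m : ℕ, DifferentiableAt ℝ (truncFenchel u m) p :=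
    ae_all_iff.2 fun m => (lipschitzWith_truncFenchel m).ae_differentiableAt
  filter_upwards [hdiff] with p hp x hpx y hpy
  obtain ⟨m, hm⟩ := exists_nat_ge (max (max ‖x‖ ‖y‖) (max (-u x) (-u y)))
  simp only [max_le_iff] at hm
  exact subsingleton_subgrad_of_differentiableAt (hp m)
    (mem_subgrad_truncFenchel hpx ⟨hm.1.1, by linarith [hm.2.1]⟩)
    (mem_subgrad_truncFenchel hpy ⟨hm.1.2, by linarith [hm.2.2]⟩)

theorem aedisjoint_subgradImage (u : En n → ℝ) {s t : Set (En n)} (hst : Disjoint s t) :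
    AEDisjoint volume (subgradImage u s) (subgradImage u t) := by
  refine measure_mono_null ?_ (ae_iff.1 (ae_subsingleton_setOf_mem_subgrad u))
  rintro p ⟨hps, hpt⟩ hp
  obtain ⟨x, hxs, hpx⟩ := mem_subgradImage.1 hps
  obtain ⟨y, hyt, hpy⟩ := mem_subgradImage.1 hpt
  exact hst.ne_of_mem hxs hyt (hp hpx hpy)

theorem isClosed_subgradImage_of_isCompact (hu : LowerSemicontinuous u) {K : Set (En n)}
    (hK : IsCompact K) : IsClosed (subgradImage u K) := by
  have : CompactSpace K := isCompact_iff_compactSpace.1 hK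
  have hval : Continuous fun q : K × En n => (q.1 : En n) :=
    continuous_subtype_val.comp continuous_fst
  have hgraph : IsClosed {q : K × En n | q.2 ∈ subgrad u q.1} := by
    have hiInter : {q : K × En n | q.2 ∈ subgrad u q.1} =
        ⋂ y, (fun q : K × En n => u q.1 + ⟪q.2, y - q.1⟫) ⁻¹' Iic (u y) := by
      ext q
      simp [subgrad]
    rw [hiInter]
    refine isClosed_iInter fun y => LowerSemicontinuous.isClosed_preimage ?_ (u y)
    exact (hu.comp hval).add (continuous_snd.inner (continuous_const.sub hval)).lowerSemicontinuous
  convert isClosedMap_snd_of_compactSpace _ hgraph using 1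
  ext p
  simp [mem_subgradImage]

theorem measurableSet_subgradImage_of_isClosed (hu : LowerSemicontinuous u) {F : Set (En n)}
    (hF : IsClosed F) : MeasurableSet (subgradImage u F) := by
  obtain ⟨K, hK, rfl⟩ := isSigmaCompact_univ.of_isClosed_subset hF (subset_univ F)
  rw [subgradImage_iUnion]
  exact MeasurableSet.iUnion fun m => (isClosed_subgradImage_of_isCompact hu (hK m)).measurableSet

theorem nullMeasurableSet_subgradImage_compl (hu : LowerSemicontinuous u) {s : Set (En n)}
    (hs : NullMeasurableSet (subgradImage u s)) : NullMeasurableSet (subgradImage u sᶜ) := by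
  have hcover : subgradImage u sᶜ =
      (subgradImage u univ \ subgradImage u s) ∪ (subgradImage u sᶜ ∩ subgradImage u s) := by
    ext p
    constructor
    · intro hp
      by_cases hps : p ∈ subgradImage u s
      · exact Or.inr ⟨hp, hps⟩
      · obtain ⟨x, -, hpx⟩ := mem_subgradImage.1 hp
        exact Or.inl ⟨mem_subgradImage.2 ⟨x, mem_univ x, hpx⟩, hps⟩
    · rintro (⟨hpu, hps⟩ | ⟨hp, -⟩)
      · obtain ⟨x, -, hpx⟩ := mem_subgradImage.1 hpu
        exact mem_subgradImage.2 ⟨x, fun hx => hps (mem_subgradImage.2 ⟨x, hx, hpx⟩), hpx⟩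
      · exact hp
  rw [hcover]
  exact ((measurableSet_subgradImage_of_isClosed hu isClosed_univ).nullMeasurableSet.diff hs).union
    (NullMeasurableSet.of_null (aedisjoint_subgradImage u disjoint_compl_left))

theorem nullMeasurableSet_subgradImage (hu : LowerSemicontinuous u) {B : Set (En n)}
    (hB : MeasurableSet B) : NullMeasurableSet (subgradImage u B) := by
  induction B, hB using MeasurableSet.induction_on_open with
  | isOpen U hU =>
    simpa using nullMeasurableSet_subgradImage_compl hu
      (measurableSet_subgradImage_of_isClosed hu hU.isClosed_compl).nullMeasurableSet
  | compl t _ ht => exact nullMeasurableSet_subgradImage_compl hu ht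
  | iUnion f _ _ hf =>
    rw [subgradImage_iUnion]
    exact .iUnion hf

end

theorem omega_is_borel_measure_general (n : ℕ)
    (u : En n → ℝ) (hu : ConvexOn ℝ univ u)
    (φ : En (n + 1) → ℝ) :
    (∀ B : Set (En n), MeasurableSet B → NullMeasurableSet (subgradImage u B) volume) ∧
    omegaMeas u φ (∅ : Set (En n)) = 0 ∧
    (∀ B : ℕ → Set (En n), (∀ i, MeasurableSet (B i)) →
      Pairwise (Function.onFun Disjoint B) →
      omegaMeas u φ (⋃ i, B i) = ∑' i, omegaMeas u φ (B i)) := by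
  have hlsc : LowerSemicontinuous u :=
    (continuousOn_univ.1 (hu.continuousOn isOpen_univ)).lowerSemicontinuous
  refine ⟨fun B hB => nullMeasurableSet_subgradImage hlsc hB, by simp [omegaMeas, subgradImage],
    fun B hB hB_disj => ?_⟩
  simp only [omegaMeas, subgradImage_iUnion]
  exact lintegral_iUnion₀ (fun i => nullMeasurableSet_subgradImage hlsc (hB i))
    (fun i j hij => aedisjoint_subgradImage u (hB_disj hij)) _

/-- `ω(·, u, φ)` is a Borel measure: `∂u(B)` is Lebesgue measurable for
Borel `B`, `ω(∅) = 0`, and `ω` is countably additive on pairwise disjoint Borel sets. -/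
theorem omega_is_borel_measure (n : ℕ) (hn : 1 ≤ n)
    (u : En n → ℝ) (hu : ConvexOn ℝ univ u)
    (φ : En (n + 1) → ℝ) (hφc : Continuous φ) (hφ0 : ∀ z, 0 ≤ φ z) :
    (∀ B : Set (En n), MeasurableSet B → NullMeasurableSet (subgradImage u B) volume) ∧
    omegaMeas u φ (∅ : Set (En n)) = 0 ∧
    (∀ B : ℕ → Set (En n), (∀ i, MeasurableSet (B i)) →
      Pairwise (Function.onFun Disjoint B) →
      omegaMeas u φ (⋃ i, B i) = ∑' i, omegaMeas u φ (B i)) :=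
  omega_is_borel_measure_general n u hu φ
end
end

section
/- Let n ≥ 1 and let ρ be a finite Borel measure on ℝ^n with finite first moment that is not concentrated on any affine hyperplane (no affine hyperplane H has ρ(ℝ^n \ H) = 0). Define the measure ρ' on ℝ^n by ρ'(B) = ∫_B √(1+|x|²) dρ(x), let L(x) = (x,−1)/√(1+|x|²), let L_♯ρ' be the push-forward of ρ' to the lower open hemisphere S^n_- extended by zero to all of S^n, and set ρ̄ = L_♯ρ' + (L_♯ρ')∘R where R(ξ) = −ξ. Then ρ̄ is a finite even Borel measure on S^n (invariant under the antipodal map), and ρ̄ is not concentrated on any great subsphere: for every linear hyperplane W ⊂ ℝ^{n+1}, ρ̄(S^n \ W) > 0. -/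
/-!
Write a vector of `ℝ^{n+1}` as `(a, t)` with `a ∈ ℝ^n`. Then
`⟪(a, t), L x⟫ = (⟪a, x⟫ - t) / √(1 + |x|²)`, so `L` pulls the part of `S^n` off the great
subsphere `(a, t)^⊥` back to the complement of the affine hyperplane `⟪a, x⟫ = t` (all of `ℝ^n`
when `a = 0`), which has positive `ρ`-measure. Since the density of `ρ'` is at least `1`,
`ρ' ≥ ρ`; since it is at most `1 + |x|`, `ρ'` is finite. Evenness holds because `R` is an
involution.
-/

open MeasureTheory Metric Set Filter
open scoped RealInnerProductSpace ENNReal NNReal Topology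

noncomputable section

/-- The map `L : ℝ^n → S^n`, `L(x) = (x, −1)/√(1+|x|²)`. -/
def Lmap {n : ℕ} (x : En n) : En (n + 1) :=
  (Real.sqrt (1 + ‖x‖ ^ 2))⁻¹ • lift x (-1)

lemma continuous_lift {n : ℕ} (t : ℝ) : Continuous fun x : En n => lift x t := by
  unfold lift
  fun_prop

lemma inner_lift_lift {n : ℕ} (a x : En n) (s t : ℝ) :
    ⟪lift a s, lift x t⟫ = ⟪a, x⟫ + s * t := by
  simp [lift, PiLp.inner_apply, Fin.sum_univ_castSucc, mul_comm]

lemma norm_lift {n : ℕ} (x : En n) (t : ℝ) : ‖lift x t‖ = √(‖x‖ ^ 2 + t ^ 2) := by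
  rw [← Real.sqrt_sq (norm_nonneg _), ← real_inner_self_eq_norm_sq, inner_lift_lift,
    real_inner_self_eq_norm_sq, sq t]

lemma lift_eq_zero_iff {n : ℕ} (x : En n) (t : ℝ) : lift x t = 0 ↔ x = 0 ∧ t = 0 := by
  rw [← inner_self_eq_zero (𝕜 := ℝ), inner_lift_lift,
    add_eq_zero_iff_of_nonneg real_inner_self_nonneg (mul_self_nonneg t), inner_self_eq_zero,
    mul_self_eq_zero]

lemma exists_eq_lift {n : ℕ} (v : En (n + 1)) : ∃ a t, v = lift a t :=
  ⟨WithLp.toLp 2 (Fin.init v), v (Fin.last n), by simp [lift, Fin.snoc_init_self]⟩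

lemma measurable_Lmap {n : ℕ} : Measurable (Lmap (n := n)) := by
  unfold Lmap
  have : Continuous fun x : En n => √(1 + ‖x‖ ^ 2) := by fun_prop
  exact this.measurable.inv.smul (continuous_lift (-1)).measurable

lemma norm_Lmap {n : ℕ} (x : En n) : ‖Lmap x‖ = 1 := by
  have h : 0 < √(1 + ‖x‖ ^ 2) := by positivity
  rw [Lmap, norm_smul, norm_lift, neg_one_sq, add_comm (‖x‖ ^ 2),
    Real.norm_of_nonneg (inv_nonneg.2 h.le), inv_mul_cancel₀ h.ne']

lemma inner_lift_Lmap {n : ℕ} (a x : En n) (t : ℝ) :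
    ⟪lift a t, Lmap x⟫ = (√(1 + ‖x‖ ^ 2))⁻¹ * (⟪a, x⟫ - t) := by
  rw [Lmap, real_inner_smul_right, inner_lift_lift]
  ring

lemma Lmap_preimage_sphere_diff_orthogonal {n : ℕ} (a : En n) (t : ℝ) :
    Lmap ⁻¹' ({ξ | ‖ξ‖ = 1} \ {ξ | ⟪lift a t, ξ⟫ = 0}) = {x | ⟪a, x⟫ = t}ᶜ := by
  ext x
  have h : 0 < √(1 + ‖x‖ ^ 2) := by positivity
  simp [norm_Lmap, inner_lift_Lmap, h.ne', sub_eq_zero]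

lemma sqrt_one_add_sq_le_one_add {x : ℝ} (hx : 0 ≤ x) : √(1 + x ^ 2) ≤ 1 + x :=
  Real.sqrt_le_iff.2 ⟨by positivity, by nlinarith⟩

lemma lintegral_sqrt_one_add_norm_sq_ne_top {E : Type*} [NormedAddCommGroup E]
    [MeasurableSpace E] {μ : Measure E} [IsFiniteMeasure μ] (h : ∫⁻ x, ‖x‖ₑ ∂μ ≠ ⊤) :
    ∫⁻ x, ENNReal.ofReal √(1 + ‖x‖ ^ 2) ∂μ ≠ ⊤ := by
  have hle (x : E) : ENNReal.ofReal √(1 + ‖x‖ ^ 2) ≤ 1 + ‖x‖ₑ := by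
    rw [← ofReal_norm, ← ENNReal.ofReal_one, ← ENNReal.ofReal_add zero_le_one (norm_nonneg x)]
    exact ENNReal.ofReal_le_ofReal (sqrt_one_add_sq_le_one_add (norm_nonneg x))
  refine ne_top_of_le_ne_top ?_ (lintegral_mono hle)
  rw [lintegral_add_left measurable_const, lintegral_const]
  exact ENNReal.add_ne_top.2 ⟨by simp, h⟩

lemma le_withDensity_of_one_le {α : Type*} [MeasurableSpace α] (μ : Measure α) {f : α → ℝ≥0∞}
    (hf : ∀ x, 1 ≤ f x) : μ ≤ μ.withDensity f := by
  calc μ = μ.withDensity 1 := withDensity_one.symm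
    _ ≤ μ.withDensity f := withDensity_mono (ae_of_all _ hf)

lemma map_add_map_of_involutive {α : Type*} [MeasurableSpace α] {T : α → α} (hT : Measurable T)
    (hT' : Function.Involutive T) (μ : Measure α) : (μ + μ.map T).map T = μ + μ.map T := by
  rw [Measure.map_add _ _ hT, Measure.map_map hT hT, hT'.comp_self, Measure.map_id, add_comm]

lemma measure_compl_hyperplane_ne_zero {E : Type*} [NormedAddCommGroup E]
    [InnerProductSpace ℝ E] [MeasurableSpace E] [Nontrivial E] {ρ : Measure E}
    (hρ : ∀ (a : E) (b : ℝ), a ≠ 0 → ρ {x | ⟪a, x⟫ = b}ᶜ ≠ 0) {a : E} {t : ℝ}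
    (hat : a ≠ 0 ∨ t ≠ 0) : ρ {x | ⟪a, x⟫ = t}ᶜ ≠ 0 := by
  rcases eq_or_ne a 0 with rfl | ha
  · have ht : t ≠ 0 := by simpa using hat
    have huniv : {x : E | ⟪0, x⟫ = t}ᶜ = univ := by
      ext x
      simp [ht.symm]
    obtain ⟨e, he⟩ := exists_ne (0 : E)
    rw [huniv]
    exact fun h0 => hρ e 0 he (measure_mono_null (subset_univ _) h0)
  · exact hρ a t ha

/-- the symmetrized lift `ρ̄ = L_♯ρ' + (L_♯ρ')∘R` of a measure `ρ` with
finite first moment not concentrated on any affine hyperplane is a finite even Borel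
measure on `S^n` not concentrated on any great subsphere. -/
theorem lifted_measure_even_not_concentrated (n : ℕ) (hn : 1 ≤ n)
    (ρ : Measure (En n)) [IsFiniteMeasure ρ]
    -- finite first moment
    (hρmom : ∫⁻ x, ‖x‖₊ ∂ρ ≠ ⊤)
    -- not concentrated on any affine hyperplane
    (hρhyp : ∀ (a : En n) (b : ℝ), a ≠ 0 → ρ {x | ⟪a, x⟫ = b}ᶜ ≠ 0) :
    -- ρ'(B) = ∫_B √(1+|x|²) dρ
    let ρ' : Measure (En n) :=
      ρ.withDensity fun x => ENNReal.ofReal (Real.sqrt (1 + ‖x‖ ^ 2))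
    -- ρ̄ = L_♯ρ' + (L_♯ρ')∘R with R(ξ) = −ξ
    let ρbar : Measure (En (n + 1)) :=
      ρ'.map Lmap + (ρ'.map Lmap).map fun ξ => -ξ
    IsFiniteMeasure ρbar ∧
    ρbar.map (fun ξ => -ξ) = ρbar ∧
    ∀ v : En (n + 1), v ≠ 0 →
      0 < ρbar ({ξ | ‖ξ‖ = 1} \ {ξ | ⟪v, ξ⟫ = 0}) := by
  intro ρ' ρbar
  have : IsFiniteMeasure ρ' :=
    isFiniteMeasure_withDensity (lintegral_sqrt_one_add_norm_sq_ne_top hρmom)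
  refine ⟨inferInstance, map_add_map_of_involutive measurable_neg neg_involutive _,
    fun v hv => ?_⟩
  obtain ⟨a, t, rfl⟩ := exists_eq_lift v
  have hat : a ≠ 0 ∨ t ≠ 0 := by rwa [Ne, lift_eq_zero_iff, not_and_or] at hv
  have hρρ' : ρ ≤ ρ' := le_withDensity_of_one_le ρ fun x =>
    ENNReal.one_le_ofReal.2 (Real.one_le_sqrt.2 (by simp))
  have : Nonempty (Fin n) := ⟨⟨0, hn⟩⟩
  calc 0 < ρ {x | ⟪a, x⟫ = t}ᶜ :=
        pos_iff_ne_zero.2 (measure_compl_hyperplane_ne_zero hρhyp hat)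
    _ ≤ ρ' {x | ⟪a, x⟫ = t}ᶜ := hρρ' _
    _ = ρ' (Lmap ⁻¹' ({ξ | ‖ξ‖ = 1} \ {ξ | ⟪lift a t, ξ⟫ = 0})) := by
      rw [Lmap_preimage_sphere_diff_orthogonal]
    _ ≤ ρ'.map Lmap ({ξ | ‖ξ‖ = 1} \ {ξ | ⟪lift a t, ξ⟫ = 0}) :=
      Measure.le_map_apply measurable_Lmap.aemeasurable _
    _ ≤ ρbar ({ξ | ‖ξ‖ = 1} \ {ξ | ⟪lift a t, ξ⟫ = 0}) :=
      Measure.le_add_right le_rfl _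
end
end

section
/- Let n ≥ 1 and r > 0, let φ_γ(z) = (2π)^{-(n+1)/2} e^{-|z|²/2} be the standard Gaussian density on ℝ^{n+1}, and set g(r) = (2π)^{-(n+1)/2} e^{-r²/2} r^n. Then u(x) = r√(1+|x|²) is a smooth convex classical solution of the Monge–Ampère equation φ_γ(Du(x), u*(Du(x))) · det D²u(x) = g(r) · (1+|x|²)^{-(n+2)/2} for all x ∈ ℝ^n. -/
open MeasureTheory Metric Set Filter
open scoped RealInnerProductSpace ENNReal NNReal Topology

noncomputable section

/-- The Hessian matrix of second partial derivatives of `u : ℝ^n → ℝ` at `x`. -/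
def hessian {n : ℕ} (u : En n → ℝ) (x : En n) : Matrix (Fin n) (Fin n) ℝ :=
  Matrix.of fun i j : Fin n =>
    fderiv ℝ (fun y => fderiv ℝ u y (EuclideanSpace.single j 1)) x
      (EuclideanSpace.single i 1)

/-- The standard Gaussian density on `ℝ^{n+1}`: `φ_γ(z) = (2π)^{-(n+1)/2} e^{-|z|²/2}`. -/
def gaussDensity (n : ℕ) (z : En (n + 1)) : ℝ :=
  (2 * Real.pi) ^ (-(((n : ℝ) + 1) / 2)) * Real.exp (-‖z‖ ^ 2 / 2)

/-- The density (with respect to spherical measure) of the Gaussian surface-area measure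
of the Euclidean ball of radius `r` in `ℝ^{n+1}`: `g(r) = (2π)^{-(n+1)/2} e^{-r²/2} r^n`. -/
def gBall (n : ℕ) (r : ℝ) : ℝ :=
  (2 * Real.pi) ^ (-(((n : ℝ) + 1) / 2)) * Real.exp (-r ^ 2 / 2) * r ^ n

namespace MAaux

variable {n : ℕ}

lemma inner_lift (x y : En n) (a b : ℝ) : ⟪lift x a, lift y b⟫ = ⟪x, y⟫ + a * b := by
  simp only [lift, PiLp.inner_apply, RCLike.inner_apply, starRingEnd_apply, star_trivial]
  rw [Fin.sum_univ_castSucc]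
  simp [Fin.snoc_castSucc, Fin.snoc_last]
  ring

lemma norm_lift_sq (x : En n) (a : ℝ) : ‖lift x a‖ ^ 2 = ‖x‖ ^ 2 + a ^ 2 := by
  have h := inner_lift x x a a
  rw [real_inner_self_eq_norm_sq, real_inner_self_eq_norm_sq] at h
  simpa [sq] using h

lemma norm_lift_one (x : En n) : ‖lift x 1‖ = Real.sqrt (1 + ‖x‖ ^ 2) := by
  rw [← Real.sqrt_sq (norm_nonneg (lift x 1)), norm_lift_sq]
  ring_nf

end MAaux

namespace MAaux2
variable {n : ℕ}

lemma sq_sqrt' (x : En n) : Real.sqrt (1 + ‖x‖ ^ 2) ^ 2 = 1 + ‖x‖ ^ 2 :=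
  Real.sq_sqrt (by positivity)

lemma sqrt_pos' (x : En n) : 0 < Real.sqrt (1 + ‖x‖ ^ 2) :=
  Real.sqrt_pos.2 (by positivity)

lemma hasFDerivAt_s (x : En n) :
    HasFDerivAt (fun y : En n => Real.sqrt (1 + ‖y‖ ^ 2))
      ((Real.sqrt (1 + ‖x‖ ^ 2))⁻¹ • innerSL ℝ x) x := by
  have h0 : (0:ℝ) < 1 + ‖x‖ ^ 2 := by positivity
  have h1 : HasFDerivAt (fun y : En n => 1 + ‖y‖ ^ 2) (2 • innerSL ℝ x) x := by
    simpa using ((hasFDerivAt_id x).norm_sq).const_add 1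
  have h2 := (Real.hasDerivAt_sqrt h0.ne').comp_hasFDerivAt x h1
  have hs := (sqrt_pos' x).ne'
  have heq : ((Real.sqrt (1 + ‖x‖ ^ 2))⁻¹ • innerSL ℝ x : En n →L[ℝ] ℝ)
      = (1 / (2 * Real.sqrt (1 + ‖x‖ ^ 2))) • (2 • innerSL ℝ x) := by
    ext v
    simp only [ContinuousLinearMap.smul_apply, smul_eq_mul, two_smul,
      ContinuousLinearMap.add_apply]
    field_simp
    ring
  rw [heq]
  exact h2

end MAaux2

namespace MAaux3
open MAaux MAaux2
variable {n : ℕ}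

lemma hasFDerivAt_u (r : ℝ) (x : En n) :
    HasFDerivAt (fun y : En n => r * Real.sqrt (1 + ‖y‖ ^ 2))
      ((r / Real.sqrt (1 + ‖x‖ ^ 2)) • innerSL ℝ x) x := by
  have := (hasFDerivAt_s x).const_mul r
  have heq : ((r / Real.sqrt (1 + ‖x‖ ^ 2)) • innerSL ℝ x : En n →L[ℝ] ℝ)
      = r • ((Real.sqrt (1 + ‖x‖ ^ 2))⁻¹ • innerSL ℝ x) := by
    rw [smul_smul, div_eq_mul_inv]
  rw [heq]
  exact this

lemma hasGradientAt_u (r : ℝ) (x : En n) :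
    HasGradientAt (fun y : En n => r * Real.sqrt (1 + ‖y‖ ^ 2))
      ((r / Real.sqrt (1 + ‖x‖ ^ 2)) • x) x := by
  rw [hasGradientAt_iff_hasFDerivAt]
  have heq : (InnerProductSpace.toDual ℝ (En n)) ((r / Real.sqrt (1 + ‖x‖ ^ 2)) • x)
      = ((r / Real.sqrt (1 + ‖x‖ ^ 2)) • innerSL ℝ x : En n →L[ℝ] ℝ) := by
    ext v
    simp [InnerProductSpace.toDual_apply_apply, inner_smul_left]
  rw [heq]
  exact hasFDerivAt_u r x

lemma gradient_u (r : ℝ) (x : En n) :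
    gradient (fun y : En n => r * Real.sqrt (1 + ‖y‖ ^ 2)) x
      = (r / Real.sqrt (1 + ‖x‖ ^ 2)) • x :=
  (hasGradientAt_u r x).gradient

end MAaux3

namespace MAaux4
open MAaux MAaux2 MAaux3
variable {n : ℕ}

lemma key_CS (x z : En n) :
    1 + ⟪x, z⟫ ≤ Real.sqrt (1 + ‖x‖ ^ 2) * Real.sqrt (1 + ‖z‖ ^ 2) := by
  have h1 : 1 + ⟪x, z⟫ = ⟪lift x 1, lift z 1⟫ := by
    rw [inner_lift]; ring
  rw [h1, ← norm_lift_one, ← norm_lift_one]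
  exact real_inner_le_norm _ _

lemma fenchel_u (r : ℝ) (hr : 0 < r) (x : En n) :
    fenchel (fun y : En n => r * Real.sqrt (1 + ‖y‖ ^ 2))
      ((r / Real.sqrt (1 + ‖x‖ ^ 2)) • x)
      = -r / Real.sqrt (1 + ‖x‖ ^ 2) := by
  set s := Real.sqrt (1 + ‖x‖ ^ 2) with hsdef
  clear_value s
  have hs : 0 < s := hsdef ▸ sqrt_pos' x
  have hs2 : s ^ 2 = 1 + ‖x‖ ^ 2 := hsdef ▸ sq_sqrt' x
  have hub : ∀ z : En n, ⟪(r / s) • x, z⟫ - r * Real.sqrt (1 + ‖z‖ ^ 2) ≤ -r / s := by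
    intro z
    have hcs := key_CS x z
    rw [← hsdef] at hcs
    have hz : 0 < Real.sqrt (1 + ‖z‖ ^ 2) := sqrt_pos' z
    have h2 : ⟪(r / s) • x, z⟫ = (r / s) * ⟪x, z⟫ := by
      simp [inner_smul_left]
    rw [h2]
    have h3 : (r / s) * ⟪x, z⟫ ≤ (r / s) * (s * Real.sqrt (1 + ‖z‖ ^ 2) - 1) := by
      apply mul_le_mul_of_nonneg_left (by linarith) (by positivity)
    have h4 : (r / s) * (s * Real.sqrt (1 + ‖z‖ ^ 2) - 1)
        = r * Real.sqrt (1 + ‖z‖ ^ 2) - r / s := by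
      field_simp
    rw [h4] at h3
    ring_nf at h3 ⊢
    linarith
  have hval : ⟪(r / s) • x, x⟫ - r * Real.sqrt (1 + ‖x‖ ^ 2) = -r / s := by
    have hx2 : ‖x‖ ^ 2 = s ^ 2 - 1 := by linarith
    rw [real_inner_smul_left, real_inner_self_eq_norm_sq, ← hsdef, hx2]
    field_simp
    ring
  unfold fenchel
  apply le_antisymm
  · exact ciSup_le hub
  · rw [← hval]
    exact le_ciSup ⟨-r / s, by rintro w ⟨z, rfl⟩; exact hub z⟩ x

end MAaux4

namespace MAaux5
open MAaux MAaux2 MAaux3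
variable {n : ℕ}

lemma fderiv_apply_single (r : ℝ) (y : En n) (j : Fin n) :
    fderiv ℝ (fun z : En n => r * Real.sqrt (1 + ‖z‖ ^ 2)) y (EuclideanSpace.single j 1)
      = r * (y j) * (Real.sqrt (1 + ‖y‖ ^ 2))⁻¹ := by
  rw [(hasFDerivAt_u r y).fderiv]
  have : (innerSL ℝ y) (EuclideanSpace.single j 1) = y j := by
    simp [EuclideanSpace.inner_single_right]
  simp only [ContinuousLinearMap.smul_apply, smul_eq_mul, this]
  field_simp

lemma hessian_u_apply (r : ℝ) (x : En n) (i j : Fin n) :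
    hessian (fun z : En n => r * Real.sqrt (1 + ‖z‖ ^ 2)) x i j
      = (r * (Real.sqrt (1 + ‖x‖ ^ 2))⁻¹) * ((if i = j then 1 else 0)
          - (Real.sqrt (1 + ‖x‖ ^ 2))⁻¹ ^ 2 * (x i * x j)) := by
  set s : En n → ℝ := fun y => Real.sqrt (1 + ‖y‖ ^ 2) with hsdef
  have hsx : 0 < s x := sqrt_pos' x
  have hentry : (fun y : En n => fderiv ℝ (fun z : En n => r * Real.sqrt (1 + ‖z‖ ^ 2)) y
      (EuclideanSpace.single j 1)) = fun y => (r * (y j)) * (s y)⁻¹ := by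
    funext y
    rw [fderiv_apply_single]
  have hcoord : HasFDerivAt (fun y : En n => r * (y j))
      (r • (EuclideanSpace.proj j : En n →L[ℝ] ℝ)) x :=
    (EuclideanSpace.proj j : En n →L[ℝ] ℝ).hasFDerivAt.const_mul r
  have hinv : HasFDerivAt (fun y : En n => (s y)⁻¹)
      ((-(s x ^ 2)⁻¹) • ((s x)⁻¹ • innerSL ℝ x)) x :=
    (hasDerivAt_inv hsx.ne').comp_hasFDerivAt x (hasFDerivAt_s x)
  have hmul := hcoord.mul hinv
  rw [show hessian (fun z : En n => r * Real.sqrt (1 + ‖z‖ ^ 2)) x i j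
      = fderiv ℝ (fun y : En n => (r * (y j)) * (s y)⁻¹) x (EuclideanSpace.single i 1) by
    rw [hessian, Matrix.of_apply, hentry]]
  rw [show (fun y : En n => (r * (y j)) * (s y)⁻¹) = (fun y : En n => r * (y j)) * (fun y => (s y)⁻¹) from rfl, hmul.fderiv]
  have h1 : (innerSL ℝ x) (EuclideanSpace.single i 1) = x i := by
    simp [EuclideanSpace.inner_single_right]
  have h2 : (EuclideanSpace.proj j : En n →L[ℝ] ℝ) (EuclideanSpace.single i 1)
      = if i = j then 1 else 0 := by
    rw [show ((EuclideanSpace.proj j : En n →L[ℝ] ℝ) (EuclideanSpace.single i 1))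
        = (EuclideanSpace.single i (1:ℝ) : En n) j from rfl, EuclideanSpace.single_apply]
    exact if_congr eq_comm rfl rfl
  simp only [ContinuousLinearMap.add_apply, ContinuousLinearMap.smul_apply, smul_eq_mul,
    h1, h2]
  rw [← inv_pow]
  ring
end MAaux5

namespace MAaux6
open MAaux MAaux2 MAaux3 MAaux5
variable {n : ℕ}

lemma sum_coord_sq (x : En n) : ∑ j, x j * x j = ‖x‖ ^ 2 := by
  rw [← real_inner_self_eq_norm_sq]
  simp only [PiLp.inner_apply, RCLike.inner_apply, starRingEnd_apply, star_trivial]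

lemma det_hessian (r : ℝ) (x : En n) :
    (hessian (fun z : En n => r * Real.sqrt (1 + ‖z‖ ^ 2)) x).det
      = r ^ n * ((Real.sqrt (1 + ‖x‖ ^ 2))⁻¹) ^ (n + 2) := by
  have hs : 0 < Real.sqrt (1 + ‖x‖ ^ 2) := sqrt_pos' x
  have hM : hessian (fun z : En n => r * Real.sqrt (1 + ‖z‖ ^ 2)) x
      = (r * (Real.sqrt (1 + ‖x‖ ^ 2))⁻¹) •
        (1 + Matrix.replicateCol Unit (fun i => -((Real.sqrt (1 + ‖x‖ ^ 2))⁻¹ ^ 2) * x i) *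
          Matrix.replicateRow Unit (fun j => x j)) := by
    ext i j
    rw [hessian_u_apply]
    simp only [Matrix.smul_apply, Matrix.add_apply, Matrix.one_apply, Matrix.mul_apply,
      Matrix.replicateCol_apply, Matrix.replicateRow_apply, Finset.univ_unique, Finset.sum_singleton,
      smul_eq_mul]
    ring
  rw [hM, Matrix.det_smul, Matrix.det_one_add_replicateCol_mul_replicateRow]
  have hdot : dotProduct (fun j : Fin n => x j)
        (fun i => -((Real.sqrt (1 + ‖x‖ ^ 2))⁻¹ ^ 2) * x i)
      = -((Real.sqrt (1 + ‖x‖ ^ 2))⁻¹ ^ 2) * ‖x‖ ^ 2 := by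
    simp only [dotProduct]
    rw [← sum_coord_sq x, Finset.mul_sum]
    apply Finset.sum_congr rfl
    intro j _
    ring
  rw [hdot]
  have key : (1:ℝ) + -((Real.sqrt (1 + ‖x‖ ^ 2))⁻¹ ^ 2) * ‖x‖ ^ 2
      = (Real.sqrt (1 + ‖x‖ ^ 2))⁻¹ ^ 2 := by
    have h2 : ‖x‖ ^ 2 = Real.sqrt (1 + ‖x‖ ^ 2) ^ 2 - 1 := by linarith [sq_sqrt' x]
    rw [h2]
    field_simp
    rw [show (1:ℝ) + (Real.sqrt (1 + ‖x‖ ^ 2) ^ 2 - 1) = Real.sqrt (1 + ‖x‖ ^ 2) ^ 2 by ring,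
      Real.sqrt_sq hs.le]
    field_simp
    ring
  rw [key, Fintype.card_fin, mul_pow, pow_add]
  ring

end MAaux6

namespace MAmain
open MAaux MAaux2 MAaux3 MAaux4 MAaux5 MAaux6
variable {n : ℕ}

lemma contDiff_u (r : ℝ) : ContDiff ℝ (⊤ : ℕ∞) (fun y : En n => r * Real.sqrt (1 + ‖y‖ ^ 2)) := by
  apply contDiff_const.mul
  exact (contDiff_const.add (contDiff_norm_sq ℝ)).sqrt (fun y => by positivity)

lemma lift_combo (a b : ℝ) (hab : a + b = 1) (x y : En n) :
    lift (a • x + b • y) 1 = a • lift x 1 + b • lift y 1 := by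
  ext k
  refine Fin.lastCases ?_ ?_ k
  · show (Fin.snoc (a • x + b • y : En n) (1:ℝ) : Fin (n+1) → ℝ) (Fin.last n)
      = (a • lift x 1 + b • lift y 1) (Fin.last n)
    simp [lift, Fin.snoc_last, hab]
  · intro i
    show (Fin.snoc (a • x + b • y : En n) (1:ℝ) : Fin (n+1) → ℝ) i.castSucc
      = (a • lift x 1 + b • lift y 1) i.castSucc
    simp [lift, Fin.snoc_castSucc]

lemma convexOn_u (r : ℝ) (hr : 0 ≤ r) :
    ConvexOn ℝ univ (fun y : En n => r * Real.sqrt (1 + ‖y‖ ^ 2)) := by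
  refine ⟨convex_univ, fun x _ y _ a b ha hb hab => ?_⟩
  simp only [smul_eq_mul]
  rw [← norm_lift_one, ← norm_lift_one, ← norm_lift_one]
  have h1 : ‖lift (a • x + b • y) 1‖ ≤ a * ‖lift x 1‖ + b * ‖lift y 1‖ := by
    rw [lift_combo a b hab]
    calc ‖a • lift x 1 + b • lift y 1‖ ≤ ‖a • lift x 1‖ + ‖b • lift y 1‖ := norm_add_le _ _
    _ = a * ‖lift x 1‖ + b * ‖lift y 1‖ := by
        rw [norm_smul, norm_smul, Real.norm_eq_abs, Real.norm_eq_abs,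
          abs_of_nonneg ha, abs_of_nonneg hb]
  calc r * ‖lift (a • x + b • y) 1‖ ≤ r * (a * ‖lift x 1‖ + b * ‖lift y 1‖) :=
        mul_le_mul_of_nonneg_left h1 hr
  _ = a * (r * ‖lift x 1‖) + b * (r * ‖lift y 1‖) := by ring

lemma rpow_eq (x : En n) :
    ((Real.sqrt (1 + ‖x‖ ^ 2))⁻¹) ^ (n + 2)
      = (1 + ‖x‖ ^ 2) ^ (-(((n : ℝ) + 2) / 2)) := by
  have hA : (0:ℝ) < 1 + ‖x‖ ^ 2 := by positivity
  rw [inv_pow, ← Real.rpow_natCast (Real.sqrt (1 + ‖x‖ ^ 2)) (n + 2), Real.sqrt_eq_rpow,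
    ← Real.rpow_mul hA.le, ← Real.rpow_neg hA.le]
  congr 1
  push_cast
  ring

lemma norm_lift_grad (r : ℝ) (x : En n) :
    ‖lift ((r / Real.sqrt (1 + ‖x‖ ^ 2)) • x) (-r / Real.sqrt (1 + ‖x‖ ^ 2))‖ ^ 2
      = r ^ 2 := by
  have hs : 0 < Real.sqrt (1 + ‖x‖ ^ 2) := sqrt_pos' x
  have hs2 : Real.sqrt (1 + ‖x‖ ^ 2) ^ 2 = 1 + ‖x‖ ^ 2 := sq_sqrt' x
  rw [norm_lift_sq, norm_smul, Real.norm_eq_abs, mul_pow, sq_abs]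
  have hx2 : ‖x‖ ^ 2 = Real.sqrt (1 + ‖x‖ ^ 2) ^ 2 - 1 := by linarith
  rw [hx2]
  field_simp
  rw [show (1:ℝ) + (Real.sqrt (1 + ‖x‖ ^ 2) ^ 2 - 1) = Real.sqrt (1 + ‖x‖ ^ 2) ^ 2 by ring,
    Real.sqrt_sq hs.le, sub_add_cancel]
  field_simp

end MAmain

/-- `u(x) = r√(1+|x|²)` is a smooth convex classical solution of
`φ_γ(Du, u*(Du)) · det D²u = g(r) · (1+|x|²)^{-(n+2)/2}` on `ℝ^n`, where
`g(r) = (2π)^{-(n+1)/2} e^{-r²/2} r^n`. -/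
theorem r_sqrt_solves_gaussian_MA (n : ℕ) (hn : 1 ≤ n) (r : ℝ) (hr : 0 < r) :
    let u : En n → ℝ := fun x => r * Real.sqrt (1 + ‖x‖ ^ 2)
    ContDiff ℝ (⊤ : ℕ∞) u ∧ ConvexOn ℝ univ u ∧
    ∀ x : En n,
      gaussDensity n (lift (gradient u x) (fenchel u (gradient u x))) *
          (hessian u x).det =
        gBall n r * (1 + ‖x‖ ^ 2) ^ (-(((n : ℝ) + 2) / 2)) := by
  intro u
  refine ⟨MAmain.contDiff_u r, MAmain.convexOn_u r hr.le, fun x => ?_⟩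
  show gaussDensity n (lift (gradient (fun y : En n => r * Real.sqrt (1 + ‖y‖ ^ 2)) x)
      (fenchel (fun y : En n => r * Real.sqrt (1 + ‖y‖ ^ 2))
        (gradient (fun y : En n => r * Real.sqrt (1 + ‖y‖ ^ 2)) x))) *
      (hessian (fun y : En n => r * Real.sqrt (1 + ‖y‖ ^ 2)) x).det
    = gBall n r * (1 + ‖x‖ ^ 2) ^ (-(((n : ℝ) + 2) / 2))
  rw [MAaux3.gradient_u, MAaux4.fenchel_u r hr x, MAaux6.det_hessian]
  simp only [gaussDensity, gBall]
  rw [MAmain.norm_lift_grad, ← MAmain.rpow_eq]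
  ring
end
end

section
/- Let n ≥ 1, let φ_γ(z) = (2π)^{-(n+1)/2} e^{-|z|²/2} be the standard Gaussian density on ℝ^{n+1}, and let g(r) = (2π)^{-(n+1)/2} e^{-r²/2} r^n. There exists a₀ > 0 such that for every a with 0 < a < a₀ the Monge–Ampère equation a^{-1} φ_γ(Du(x), u*(Du(x))) det D²u(x) = f(x) with f(x) = (1+|x|²)^{-(n+2)/2} admits two distinct smooth convex solutions on ℝ^n: namely u_i(x) = r_i√(1+|x|²) for i = 1,2, where 0 < r₁ < r₂ are the two solutions of g(r) = a. In particular, solutions of the equation c_u φ(Du, u*(Du)) det D²u = f with a fixed constant c_u are in general not unique. -/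
open MeasureTheory Metric Set Filter
open scoped RealInnerProductSpace ENNReal NNReal Topology

noncomputable section

/-- `u` is a smooth convex classical solution of the Monge–Ampère equation
`a⁻¹ φ_γ(Du, u*(Du)) det D²u = f` with `f(x) = (1+|x|²)^{-(n+2)/2}`. -/
def SolvesGaussMA (n : ℕ) (a : ℝ) (u : En n → ℝ) : Prop :=
  ContDiff ℝ (⊤ : ℕ∞) u ∧ ConvexOn ℝ univ u ∧
    ∀ x : En n,
      a⁻¹ * gaussDensity n (lift (gradient u x) (fenchel u (gradient u x))) *
          (hessian u x).det =
        (1 + ‖x‖ ^ 2) ^ (-(((n : ℝ) + 2) / 2))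

section Aux
variable {n : ℕ}

lemma inner_lift (x y : En n) (s t : ℝ) : ⟪lift x s, lift y t⟫ = ⟪x, y⟫ + s * t := by
  simp only [lift, PiLp.inner_apply, RCLike.inner_apply, conj_trivial, PiLp.toLp_apply]
  rw [Fin.sum_univ_castSucc]
  simp [Fin.snoc_castSucc, Fin.snoc_last]
  ring

lemma norm_lift_sq (x : En n) (t : ℝ) : ‖lift x t‖ ^ 2 = ‖x‖ ^ 2 + t ^ 2 := by
  rw [← real_inner_self_eq_norm_sq, ← real_inner_self_eq_norm_sq, inner_lift]; ring

lemma lift_smul_add (a b : ℝ) (x y : En n) :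
    a • lift x 1 + b • lift y 1 = lift (a • x + b • y) (a + b) := by
  ext i
  refine Fin.lastCases ?_ (fun i => ?_) i <;>
    simp [lift, Fin.snoc_last, Fin.snoc_castSucc, PiLp.add_apply, PiLp.smul_apply]


def sfn {n : ℕ} (x : En n) : ℝ := Real.sqrt (1 + ‖x‖ ^ 2)

lemma one_add_norm_pos (x : En n) : (0:ℝ) < 1 + ‖x‖ ^ 2 := by positivity
lemma sfn_pos (x : En n) : 0 < sfn x := Real.sqrt_pos.2 (one_add_norm_pos x)
lemma sfn_sq (x : En n) : sfn x ^ 2 = 1 + ‖x‖ ^ 2 := Real.sq_sqrt (one_add_norm_pos x).le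

lemma hasFDerivAt_sfn (x : En n) :
    HasFDerivAt (fun y : En n => sfn y) ((sfn x)⁻¹ • innerSL ℝ x) x := by
  have h1 : HasFDerivAt (fun y : En n => 1 + ‖y‖ ^ 2) (2 • innerSL ℝ x) x := by
    simpa using ((hasFDerivAt_id x).norm_sq).const_add 1
  have h2 := h1.sqrt (by positivity)
  refine h2.congr_fderiv ?_
  ext v
  have := sfn_pos x
  simp only [ContinuousLinearMap.coe_smul', Pi.smul_apply, smul_eq_mul, sfn] at *
  field_simp
  ring

lemma hasGradientAt_u (r : ℝ) (x : En n) :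
    HasGradientAt (fun y : En n => r * Real.sqrt (1 + ‖y‖ ^ 2)) ((r * (sfn x)⁻¹) • x) x := by
  have h := (hasFDerivAt_sfn x).const_mul r
  rw [hasGradientAt_iff_hasFDerivAt]
  refine h.congr_fderiv ?_
  ext v
  simp [InnerProductSpace.toDual_apply_apply, inner_smul_left, sfn, mul_comm]
  ring

lemma gradient_u (r : ℝ) (x : En n) :
    gradient (fun y : En n => r * Real.sqrt (1 + ‖y‖ ^ 2)) x = (r * (sfn x)⁻¹) • x :=
  (hasGradientAt_u r x).gradient

lemma fderiv_u_apply (r : ℝ) (x v : En n) :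
    fderiv ℝ (fun y : En n => r * Real.sqrt (1 + ‖y‖ ^ 2)) x v = r * ((sfn x)⁻¹ * ⟪x, v⟫) := by
  have h := ((hasFDerivAt_sfn x).const_mul r).fderiv
  have : fderiv ℝ (fun y : En n => r * Real.sqrt (1 + ‖y‖ ^ 2)) x
      = r • (sfn x)⁻¹ • innerSL ℝ x := by
    simpa [sfn] using h
  rw [this]
  simp [mul_assoc]

lemma hasFDerivAt_partial (r : ℝ) (j : Fin n) (x : En n) :
    HasFDerivAt (fun y : En n => r * ((sfn y)⁻¹ * ⟪y, EuclideanSpace.single j 1⟫))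
      (r • ((sfn x)⁻¹ • innerSL ℝ (EuclideanSpace.single j (1:ℝ))
        + (-((sfn x) ^ 2)⁻¹ * ((sfn x)⁻¹ * ⟪x, EuclideanSpace.single j 1⟫)) • innerSL ℝ x)) x := by
  have hs := hasFDerivAt_sfn x
  have hinv : HasFDerivAt (fun y : En n => (sfn y)⁻¹)
      (-((sfn x)^2)⁻¹ • ((sfn x)⁻¹ • innerSL ℝ x)) x := by
    simpa [Function.comp_def] using (hasDerivAt_inv (sfn_pos x).ne').comp_hasFDerivAt x hs
  have hlin : HasFDerivAt (fun y : En n => ⟪y, EuclideanSpace.single j (1:ℝ)⟫)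
      (innerSL ℝ (EuclideanSpace.single j (1:ℝ))) x := by
    have h0 := (innerSL ℝ (EuclideanSpace.single j (1:ℝ))).hasFDerivAt (x := x)
    have he : (fun y : En n => ⟪y, EuclideanSpace.single j (1:ℝ)⟫)
        = fun y : En n => (innerSL ℝ (EuclideanSpace.single j (1:ℝ))) y :=
      funext fun y => by simp [real_inner_comm]
    rw [he]
    exact h0
  have := (hinv.mul hlin).const_mul r
  refine this.congr_fderiv ?_
  ext v
  simp only [ContinuousLinearMap.coe_smul', Pi.smul_apply, ContinuousLinearMap.add_apply,
    ContinuousLinearMap.coe_smul', Pi.smul_apply, smul_eq_mul, innerSL_apply_apply]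
  ring

lemma hessian_u (r : ℝ) (x : En n) (i j : Fin n) :
    hessian (fun y : En n => r * Real.sqrt (1 + ‖y‖ ^ 2)) x i j =
      r * ((sfn x)⁻¹ * (if i = j then 1 else 0) - ((sfn x)⁻¹)^3 * (x i * x j)) := by
  have hfun : (fun y : En n => fderiv ℝ (fun z : En n => r * Real.sqrt (1 + ‖z‖ ^ 2)) y
      (EuclideanSpace.single j 1)) = fun y => r * ((sfn y)⁻¹ * ⟪y, EuclideanSpace.single j 1⟫) :=
    funext fun y => fderiv_u_apply r y _
  rw [hessian, Matrix.of_apply, hfun, (hasFDerivAt_partial r j x).fderiv]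
  simp only [ContinuousLinearMap.coe_smul', Pi.smul_apply, ContinuousLinearMap.add_apply,
    smul_eq_mul, innerSL_apply_apply, real_inner_self_eq_norm_sq,
    EuclideanSpace.inner_single_left, EuclideanSpace.inner_single_right, conj_trivial]
  have hsp := sfn_pos x
  rw [EuclideanSpace.single_apply]
  by_cases h : i = j <;> simp [h, eq_comm] <;> field_simp <;> ring_nf <;> exact Or.inl trivial

lemma norm_sq_eq_sum (x : En n) : ‖x‖ ^ 2 = ∑ i, x i ^ 2 := by
  rw [EuclideanSpace.norm_eq, Real.sq_sqrt (by positivity)]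
  simp [sq_abs]

lemma det_hessian_u (r : ℝ) (x : En n) :
    (hessian (fun y : En n => r * Real.sqrt (1 + ‖y‖ ^ 2)) x).det
      = r ^ n * ((sfn x)⁻¹) ^ (n + 2) := by
  have hsp := sfn_pos x
  have hM : hessian (fun y : En n => r * Real.sqrt (1 + ‖y‖ ^ 2)) x
      = (r * (sfn x)⁻¹) •
        ((1 : Matrix (Fin n) (Fin n) ℝ) +
          Matrix.replicateCol Unit (fun i => -(((sfn x)⁻¹)^2 * x i)) * Matrix.replicateRow Unit (fun j => x j)) := by
    ext i j
    rw [hessian_u]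
    simp only [Matrix.smul_apply, Matrix.add_apply, Matrix.one_apply,
      Matrix.mul_apply, Matrix.replicateCol_apply, Matrix.replicateRow_apply, Finset.univ_unique,
      Finset.sum_singleton, smul_eq_mul]
    by_cases h : i = j <;> simp [h] <;> ring
  rw [hM, Matrix.det_smul, Matrix.det_one_add_replicateCol_mul_replicateRow]
  have hdot : dotProduct (fun j => x j) (fun i => -(((sfn x)⁻¹)^2 * x i))
      = -(((sfn x)⁻¹)^2 * ‖x‖^2) := by
    unfold dotProduct
    rw [norm_sq_eq_sum]
    rw [Finset.sum_congr rfl (fun i _ => (by ring : x i * -(((sfn x)⁻¹)^2 * x i) = -(((sfn x)⁻¹)^2) * x i ^ 2)), ← Finset.mul_sum]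
    ring
  rw [hdot]
  have h1 : 1 + -(((sfn x)⁻¹)^2 * ‖x‖^2) = ((sfn x)⁻¹)^2 := by
    have := sfn_sq x
    field_simp
    nlinarith [this]
  rw [h1, Fintype.card_fin, mul_pow]
  ring


lemma norm_lift_one (x : En n) : ‖lift x 1‖ = sfn x := by
  rw [← Real.sqrt_sq (norm_nonneg (lift x 1)), norm_lift_sq, sfn, add_comm]
  norm_num

lemma key_CS (x y : En n) : ⟪x, y⟫ + 1 ≤ sfn x * sfn y := by
  have h := real_inner_le_norm (lift x 1) (lift y 1)
  rw [inner_lift, norm_lift_one, norm_lift_one] at h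
  simpa using h

lemma fenchel_u {r : ℝ} (hr : 0 ≤ r) (x : En n) :
    fenchel (fun y : En n => r * Real.sqrt (1 + ‖y‖ ^ 2)) ((r * (sfn x)⁻¹) • x)
      = -(r * (sfn x)⁻¹) := by
  have hsx := sfn_pos x
  have hb : ∀ y : En n, ⟪(r * (sfn x)⁻¹) • x, y⟫ - r * Real.sqrt (1 + ‖y‖ ^ 2)
      ≤ -(r * (sfn x)⁻¹) := by
    intro y
    have hsy := sfn_pos y
    have hCS := key_CS x y
    have h2 : (r * (sfn x)⁻¹) * (⟪x, y⟫ + 1) ≤ (r * (sfn x)⁻¹) * (sfn x * sfn y) :=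
      mul_le_mul_of_nonneg_left hCS (by positivity)
    have h3 : (r * (sfn x)⁻¹) * (sfn x * sfn y) = r * sfn y := by
      field_simp
    rw [real_inner_smul_left]
    have : Real.sqrt (1 + ‖y‖ ^ 2) = sfn y := rfl
    rw [this]
    nlinarith
  have hbdd : BddAbove (Set.range fun y : En n =>
      ⟪(r * (sfn x)⁻¹) • x, y⟫ - r * Real.sqrt (1 + ‖y‖ ^ 2)) :=
    ⟨-(r * (sfn x)⁻¹), Set.forall_mem_range.2 hb⟩
  refine le_antisymm (ciSup_le hb) ?_
  have hx := le_ciSup hbdd x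
  have hval : ⟪(r * (sfn x)⁻¹) • x, x⟫ - r * Real.sqrt (1 + ‖x‖ ^ 2) = -(r * (sfn x)⁻¹) := by
    rw [real_inner_smul_left, real_inner_self_eq_norm_sq]
    have h1 : Real.sqrt (1 + ‖x‖ ^ 2) = sfn x := rfl
    have h2 := sfn_sq x
    rw [h1]
    field_simp
    nlinarith
  rw [hval] at hx
  exact hx


lemma norm_lift_grad_sq {r : ℝ} (hr : 0 ≤ r) (x : En n) :
    ‖lift ((r * (sfn x)⁻¹) • x) (-(r * (sfn x)⁻¹))‖ ^ 2 = r ^ 2 := by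
  have hsx := sfn_pos x
  have hs2 := sfn_sq x
  rw [norm_lift_sq, norm_smul]
  rw [Real.norm_eq_abs, mul_pow, sq_abs]
  have hx2 : ‖x‖ ^ 2 = sfn x ^ 2 - 1 := by linarith
  rw [hx2]
  field_simp
  ring

lemma pow_sfn_inv (x : En n) (m : ℕ) :
    ((sfn x)⁻¹) ^ m = (1 + ‖x‖ ^ 2) ^ (-((m : ℝ) / 2)) := by
  have hT : (0:ℝ) < 1 + ‖x‖ ^ 2 := one_add_norm_pos x
  have h1 : sfn x ^ m = (1 + ‖x‖ ^ 2) ^ ((m : ℝ) / 2) := by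
    rw [sfn, Real.sqrt_eq_rpow, ← Real.rpow_natCast ((1 + ‖x‖ ^ 2) ^ ((1:ℝ)/2)) m,
      ← Real.rpow_mul hT.le]
    norm_num
    rw [mul_comm, mul_one_div]
  rw [inv_pow, h1, ← Real.rpow_neg hT.le]

lemma gauss_val {r : ℝ} (hr : 0 ≤ r) (x : En n) :
    gaussDensity n (lift ((r * (sfn x)⁻¹) • x) (-(r * (sfn x)⁻¹)))
      = (2 * Real.pi) ^ (-(((n : ℝ) + 1) / 2)) * Real.exp (-r ^ 2 / 2) := by
  rw [gaussDensity, norm_lift_grad_sq hr]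


lemma smooth_u (r : ℝ) : ContDiff ℝ (⊤ : ℕ∞) (fun x : En n => r * Real.sqrt (1 + ‖x‖ ^ 2)) :=
  contDiff_const.mul (((contDiff_const.add (contDiff_norm_sq ℝ)).sqrt)
    fun x => (one_add_norm_pos x).ne')

lemma convex_u {r : ℝ} (hr : 0 ≤ r) :
    ConvexOn ℝ univ (fun x : En n => r * Real.sqrt (1 + ‖x‖ ^ 2)) := by
  have hc : ConvexOn ℝ univ (fun x : En n => Real.sqrt (1 + ‖x‖ ^ 2)) := by
    refine ⟨convex_univ, fun x _ y _ a b ha hb hab => ?_⟩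
    have h1 : Real.sqrt (1 + ‖a • x + b • y‖ ^ 2) = ‖lift (a • x + b • y) 1‖ :=
      (norm_lift_one _).symm
    have h2 : lift (a • x + b • y) 1 = a • lift x 1 + b • lift y 1 := by
      rw [lift_smul_add, hab]
    simp only [smul_eq_mul]
    rw [h1, h2]
    calc ‖a • lift x 1 + b • lift y 1‖ ≤ ‖a • lift x 1‖ + ‖b • lift y 1‖ := norm_add_le _ _
      _ = a * ‖lift x 1‖ + b * ‖lift y 1‖ := by
          rw [norm_smul, norm_smul, Real.norm_eq_abs, Real.norm_eq_abs, abs_of_nonneg ha,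
            abs_of_nonneg hb]
      _ = a * Real.sqrt (1 + ‖x‖ ^ 2) + b * Real.sqrt (1 + ‖y‖ ^ 2) := by
          rw [norm_lift_one, norm_lift_one]; rfl
  simpa using hc.smul hr

lemma solves {r a : ℝ} (hr : 0 < r) (ha : gBall n r = a) :
    SolvesGaussMA n a (fun x : En n => r * Real.sqrt (1 + ‖x‖ ^ 2)) := by
  have hC : (0:ℝ) < (2 * Real.pi) ^ (-(((n : ℝ) + 1) / 2)) :=
    Real.rpow_pos_of_pos (by positivity) _
  have ha0 : 0 < a := by
    rw [← ha, gBall]; positivity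
  refine ⟨smooth_u r, convex_u hr.le, fun x => ?_⟩
  have hgrad : gradient (fun y : En n => r * Real.sqrt (1 + ‖y‖ ^ 2)) x
      = (r * (sfn x)⁻¹) • x := gradient_u r x
  rw [hgrad, fenchel_u hr.le, gauss_val hr.le, det_hessian_u]
  rw [pow_sfn_inv]
  have hrw : (1 + ‖x‖ ^ 2 : ℝ) ^ (-((((n:ℕ):ℝ) + 2) / 2))
      = (1 + ‖x‖ ^ 2 : ℝ) ^ (-(((n + 2 : ℕ) : ℝ) / 2)) := by
    norm_num
  rw [hrw, ← ha, gBall]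
  have hne : ((2 * Real.pi) ^ (-(((n : ℝ) + 1) / 2)) * Real.exp (-r ^ 2 / 2) * r ^ n : ℝ) ≠ 0 := by
    positivity
  field_simp

lemma cont_gBall : Continuous (gBall n) := by
  unfold gBall
  fun_prop

lemma gBall_tendsto : Filter.Tendsto (gBall n) Filter.atTop (nhds 0) := by
  have hC : (0:ℝ) < (2 * Real.pi) ^ (-(((n : ℝ) + 1) / 2)) :=
    Real.rpow_pos_of_pos (by positivity) _
  have hmaj : Filter.Tendsto (fun r : ℝ => (2 * Real.pi) ^ (-(((n : ℝ) + 1) / 2)) *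
      (r ^ n * Real.exp (-r))) Filter.atTop (nhds 0) := by
    have := (Real.tendsto_pow_mul_exp_neg_atTop_nhds_zero n).const_mul
      ((2 * Real.pi) ^ (-(((n : ℝ) + 1) / 2)))
    simpa using this
  apply squeeze_zero' (g := fun r : ℝ => (2 * Real.pi) ^ (-(((n : ℝ) + 1) / 2)) *
      (r ^ n * Real.exp (-r))) ?_ ?_ hmaj
  · filter_upwards [Filter.eventually_ge_atTop (0:ℝ)] with r hr
    rw [gBall]; positivity
  · filter_upwards [Filter.eventually_ge_atTop (2:ℝ)] with r hr
    rw [gBall]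
    have h1 : Real.exp (-r ^ 2 / 2) ≤ Real.exp (-r) := by
      apply Real.exp_le_exp.2
      nlinarith
    have h2 : (0:ℝ) ≤ r ^ n := by positivity
    calc (2 * Real.pi) ^ (-(((n : ℝ) + 1) / 2)) * Real.exp (-r ^ 2 / 2) * r ^ n
        ≤ (2 * Real.pi) ^ (-(((n : ℝ) + 1) / 2)) * Real.exp (-r) * r ^ n := by
          apply mul_le_mul_of_nonneg_right (mul_le_mul_of_nonneg_left h1 hC.le) h2
      _ = (2 * Real.pi) ^ (-(((n : ℝ) + 1) / 2)) * (r ^ n * Real.exp (-r)) := by ring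

lemma gBall_zero (hn : 1 ≤ n) : gBall n 0 = 0 := by
  simp [gBall, zero_pow (show n ≠ 0 by omega)]

lemma gBall_one_pos : 0 < gBall n 1 := by
  rw [gBall]; positivity

lemma exists_roots (hn : 1 ≤ n) {a : ℝ} (ha : 0 < a) (ha' : a < gBall n 1) :
    ∃ r₁ r₂ : ℝ, 0 < r₁ ∧ r₁ < r₂ ∧ gBall n r₁ = a ∧ gBall n r₂ = a := by
  -- first root in (0,1)
  obtain ⟨r₁, hr₁m, hr₁⟩ : ∃ r₁ ∈ Icc (0:ℝ) 1, gBall n r₁ = a := by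
    have := intermediate_value_Icc (by norm_num : (0:ℝ) ≤ 1)
      ((cont_gBall (n := n)).continuousOn)
    have hmem : a ∈ Icc (gBall n 0) (gBall n 1) := by
      rw [gBall_zero hn]; exact ⟨ha.le, ha'.le⟩
    obtain ⟨r₁, hr, he⟩ := this hmem
    exact ⟨r₁, hr, he⟩
  -- R with gBall R < a
  obtain ⟨R, hR⟩ := ((gBall_tendsto (n := n)).eventually_lt_const ha |>.and
    (Filter.eventually_ge_atTop (1:ℝ))).exists
  obtain ⟨r₂, hr₂m, hr₂⟩ : ∃ r₂ ∈ Icc (1:ℝ) R, gBall n r₂ = a := by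
    have := intermediate_value_Icc' hR.2 ((cont_gBall (n := n)).continuousOn)
    exact this ⟨hR.1.le, ha'.le⟩
  have h1 : r₁ < 1 := lt_of_le_of_ne hr₁m.2 fun h => by
    rw [h] at hr₁; rw [← hr₁] at ha'; exact lt_irrefl _ ha'
  have h2 : 1 < r₂ := lt_of_le_of_ne hr₂m.1 fun h => by
    rw [← h] at hr₂; rw [← hr₂] at ha'; exact lt_irrefl _ ha'
  have h0 : 0 < r₁ := lt_of_le_of_ne hr₁m.1 fun h => by
    rw [← h, gBall_zero hn] at hr₁; exact ha.ne' hr₁.symm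
  exact ⟨r₁, r₂, h0, h1.trans h2, hr₁, hr₂⟩

end Aux

/-- non-uniqueness. There is `a₀ > 0` such that for every `0 < a < a₀`
the equation `a⁻¹ φ_γ(Du, u*(Du)) det D²u = (1+|x|²)^{-(n+2)/2}` admits two distinct
smooth convex solutions `u_i(x) = r_i √(1+|x|²)`, `i = 1,2`, where `0 < r₁ < r₂` are the
two solutions of `g(r) = a`. -/

theorem gaussian_MA_nonuniqueness (n : ℕ) (hn : 1 ≤ n) :
    ∃ a₀ : ℝ, 0 < a₀ ∧
      ∀ a : ℝ, 0 < a → a < a₀ →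
        ∃ r₁ r₂ : ℝ, 0 < r₁ ∧ r₁ < r₂ ∧
          gBall n r₁ = a ∧ gBall n r₂ = a ∧
          SolvesGaussMA n a (fun x : En n => r₁ * Real.sqrt (1 + ‖x‖ ^ 2)) ∧
          SolvesGaussMA n a (fun x : En n => r₂ * Real.sqrt (1 + ‖x‖ ^ 2)) ∧
          (fun x : En n => r₁ * Real.sqrt (1 + ‖x‖ ^ 2)) ≠
            (fun x : En n => r₂ * Real.sqrt (1 + ‖x‖ ^ 2)) := by
  refine ⟨gBall n 1, gBall_one_pos, fun a ha ha' => ?_⟩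
  obtain ⟨r₁, r₂, h0, h12, hg1, hg2⟩ := exists_roots hn ha ha'
  refine ⟨r₁, r₂, h0, h12, hg1, hg2, solves h0 hg1, solves (h0.trans h12) hg2, ?_⟩
  intro h
  have h0' := congrFun h 0
  simp only [norm_zero] at h0'
  norm_num at h0'
  exact h12.ne h0'
end
end
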